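/- arXiv:math/0703310 — 8 statements merged into one kernel-verified Lean document; each statement's English description precedes it below -/
import Mathlib

section
/- Let E be a group, A an abelian normal subgroup of E, and G = E/A. The automorphisms of E inducing the identity on A and on G form a subgroup of the automorphism group of E, and the assignment φ ↦ ψ_φ, where ψ_φ(uA) = φ(u)·u⁻¹, is a group isomorphism from this subgroup onto the group Z¹(G, A) of crossed homomorphisms G → A (with pointwise multiplication). -/
/-!
Writing `φ u = ψ(u) u` turns `φ (u v) = φ u φ v` into the cocycle identity
`ψ(uv) = ψ(u) · u ψ(v) u⁻¹`; conversely a crossed homomorphism `f` yields the automorphism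
`u ↦ f u * u`, whose inverse is `u ↦ (f u)⁻¹ * u` because `f` is constant on cosets of `A`.
Commutativity of `A` is what makes `φ ↦ ψ_φ` multiplicative and `Z¹(G, A)` closed under
pointwise products and inverses.
-/

/-- The predicate on automorphisms of `E`: `φ` induces the identity on the
normal subgroup `A` and on the quotient `G = E/A`. -/
def InducesIdOn {E : Type*} [Group E] (A : Subgroup E) (φ : MulAut E) : Prop :=
  (∀ a ∈ A, φ a = a) ∧ (∀ u : E, φ u * u⁻¹ ∈ A)

/-- The predicate on functions `f : E → E` expressing that `f` is (the lift of)
a crossed homomorphism `G = E/A → A` for the conjugation action of `G` on `A`: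
its values lie in `A`, it only depends on the coset modulo `A`, and it satisfies
the cocycle condition `ψ(gh) = ψ(g) · (g • ψ(h))` with `g • a = u a u⁻¹`. -/
def IsCrossedHom {E : Type*} [Group E] (A : Subgroup E) (f : E → E) : Prop :=
  (∀ u : E, f u ∈ A) ∧
  (∀ u v : E, u⁻¹ * v ∈ A → f u = f v) ∧
  (∀ u v : E, f (u * v) = f u * (u * f v * u⁻¹))

section

variable {E : Type*} [Group E] {A : Subgroup E}

namespace InducesIdOn

theorem one : InducesIdOn A 1 :=
  ⟨fun _ _ => rfl, fun u => by simp [A.one_mem]⟩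

theorem mul_apply_mul_inv {φ φ' : MulAut E} (hφ : InducesIdOn A φ) (hφ' : InducesIdOn A φ')
    (u : E) : (φ * φ') u * u⁻¹ = (φ' u * u⁻¹) * (φ u * u⁻¹) := by
  have hsplit : (φ * φ') u = φ (φ' u * u⁻¹) * φ u := by simp [mul_assoc]
  rw [hsplit, hφ.1 _ (hφ'.2 u), mul_assoc]

theorem mul {φ φ' : MulAut E} (hφ : InducesIdOn A φ) (hφ' : InducesIdOn A φ') :
    InducesIdOn A (φ * φ') :=
  ⟨fun a ha => by simp [hφ'.1 a ha, hφ.1 a ha],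
   fun u => hφ.mul_apply_mul_inv hφ' u ▸ A.mul_mem (hφ'.2 u) (hφ.2 u)⟩

theorem inv {φ : MulAut E} (hφ : InducesIdOn A φ) : InducesIdOn A φ⁻¹ := by
  refine ⟨fun a ha => (MulEquiv.symm_apply_eq φ).2 (hφ.1 a ha).symm, fun u => ?_⟩
  have h : u * (φ⁻¹ u)⁻¹ ∈ A := by
    simpa only [MulAut.inv_apply, MulEquiv.apply_symm_apply] using hφ.2 (φ⁻¹ u)
  simpa using A.inv_mem h

theorem isCrossedHom {φ : MulAut E} (hφ : InducesIdOn A φ) :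
    IsCrossedHom A (fun u => φ u * u⁻¹) := by
  refine ⟨hφ.2, fun u v h => ?_, fun u v => ?_⟩
  · obtain ⟨a, ha, rfl⟩ : ∃ a ∈ A, v = u * a := ⟨_, h, by group⟩
    simp only [map_mul, hφ.1 a ha]
    group
  · simp only [map_mul]
    group

end InducesIdOn

theorem MulAut.eq_of_mul_inv_eq {φ φ' : MulAut E} (h : ∀ u : E, φ u * u⁻¹ = φ' u * u⁻¹) :
    φ = φ' :=
  MulEquiv.ext fun u => mul_right_cancel (h u)

namespace IsCrossedHom

theorem one : IsCrossedHom A (fun _ => (1 : E)) :=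
  ⟨fun _ => A.one_mem, fun _ _ _ => rfl, fun _ _ => by simp⟩

variable {f f' : E → E}

theorem map_one (hf : IsCrossedHom A f) : f 1 = 1 := by
  simpa using hf.2.2 1 1

variable [A.Normal]

theorem mul (hA : ∀ a ∈ A, ∀ b ∈ A, a * b = b * a) (hf : IsCrossedHom A f)
    (hf' : IsCrossedHom A f') : IsCrossedHom A (fun u => f u * f' u) := by
  obtain ⟨hm, hc, hz⟩ := hf
  obtain ⟨hm', hc', hz'⟩ := hf'
  refine ⟨fun u => A.mul_mem (hm u) (hm' u), fun u v h => by simp only [hc u v h, hc' u v h],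
    fun u v => ?_⟩
  have hcomm : (u * f v * u⁻¹) * f' u = f' u * (u * f v * u⁻¹) :=
    hA _ (Subgroup.Normal.conj_mem ‹_› _ (hm v) u) _ (hm' u)
  calc f (u * v) * f' (u * v) = f u * ((u * f v * u⁻¹) * f' u) * (u * f' v * u⁻¹) := by
        rw [hz, hz']; group
    _ = f u * f' u * (u * (f v * f' v) * u⁻¹) := by rw [hcomm]; group

theorem inv (hA : ∀ a ∈ A, ∀ b ∈ A, a * b = b * a) (hf : IsCrossedHom A f) :
    IsCrossedHom A (fun u => (f u)⁻¹) := by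
  obtain ⟨hm, hc, hz⟩ := hf
  refine ⟨fun u => A.inv_mem (hm u), fun u v h => by simp only [hc u v h], fun u v => ?_⟩
  have hcomm : (u * (f v)⁻¹ * u⁻¹) * (f u)⁻¹ = (f u)⁻¹ * (u * (f v)⁻¹ * u⁻¹) :=
    hA _ (Subgroup.Normal.conj_mem ‹_› _ (A.inv_mem (hm v)) u) _ (A.inv_mem (hm u))
  calc (f (u * v))⁻¹ = (u * (f v)⁻¹ * u⁻¹) * (f u)⁻¹ := by rw [hz]; group
    _ = (f u)⁻¹ * (u * (f v)⁻¹ * u⁻¹) := hcomm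

theorem apply_mul_left (hf : IsCrossedHom A f) {a : E} (ha : a ∈ A) (u : E) :
    f (a * u) = f u :=
  hf.2.1 _ _ (by simpa [mul_assoc] using Subgroup.Normal.conj_mem ‹_› _ (A.inv_mem ha) u⁻¹)

theorem apply_eq_one (hf : IsCrossedHom A f) {a : E} (ha : a ∈ A) : f a = 1 := by
  simpa [hf.map_one] using hf.apply_mul_left ha 1

def toMulAut (hf : IsCrossedHom A f) : MulAut E where
  toFun u := f u * u
  invFun u := (f u)⁻¹ * u
  left_inv u := by simp only [hf.apply_mul_left (hf.1 u), inv_mul_cancel_left]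
  right_inv u := by simp only [hf.apply_mul_left (A.inv_mem (hf.1 u)), mul_inv_cancel_left]
  map_mul' u v := by simp only [hf.2.2 u v]; group

theorem toMulAut_apply (hf : IsCrossedHom A f) (u : E) : hf.toMulAut u = f u * u := rfl

theorem toMulAut_apply_mul_inv (hf : IsCrossedHom A f) (u : E) :
    hf.toMulAut u * u⁻¹ = f u := by
  simp [toMulAut_apply]

theorem inducesIdOn_toMulAut (hf : IsCrossedHom A f) : InducesIdOn A hf.toMulAut :=
  ⟨fun a ha => by simp [toMulAut_apply, hf.apply_eq_one ha],
   fun u => hf.toMulAut_apply_mul_inv u ▸ hf.1 u⟩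

end IsCrossedHom

end

/-- The automorphisms of `E` inducing the identity on the abelian normal subgroup
`A` and on `G = E/A` form a subgroup of `Aut(E)`, and `φ ↦ (ψ_φ : uA ↦ φ(u)·u⁻¹)`
is a group isomorphism from this subgroup onto the group `Z¹(G,A)` of crossed
homomorphisms `G → A` with pointwise multiplication. -/
theorem stmt_3 {E : Type*} [Group E] (A : Subgroup E) [A.Normal]
    (hab : ∀ a ∈ A, ∀ b ∈ A, a * b = b * a) :
    -- the automorphisms inducing the identity on `A` and on `G` form a subgroup
    (InducesIdOn A (1 : MulAut E)) ∧
    (∀ φ φ' : MulAut E, InducesIdOn A φ → InducesIdOn A φ' → InducesIdOn A (φ * φ')) ∧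
    (∀ φ : MulAut E, InducesIdOn A φ → InducesIdOn A φ⁻¹) ∧
    -- the crossed homomorphisms form a group under pointwise multiplication
    (IsCrossedHom A (fun _ => (1 : E))) ∧
    (∀ f f' : E → E, IsCrossedHom A f → IsCrossedHom A f' →
      IsCrossedHom A (fun u => f u * f' u)) ∧
    (∀ f : E → E, IsCrossedHom A f → IsCrossedHom A (fun u => (f u)⁻¹)) ∧
    -- `φ ↦ ψ_φ` is multiplicative: `ψ_{φφ'} = ψ_φ · ψ_{φ'}` pointwise
    (∀ φ φ' : MulAut E, InducesIdOn A φ → InducesIdOn A φ' →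
      ∀ u : E, (φ * φ') u * u⁻¹ = (φ u * u⁻¹) * (φ' u * u⁻¹)) ∧
    -- `φ ↦ ψ_φ` maps the subgroup into `Z¹(G,A)`, injectively ...
    (∀ φ : MulAut E, InducesIdOn A φ → IsCrossedHom A (fun u => φ u * u⁻¹)) ∧
    (∀ φ φ' : MulAut E, InducesIdOn A φ → InducesIdOn A φ' →
      (∀ u : E, φ u * u⁻¹ = φ' u * u⁻¹) → φ = φ') ∧
    -- ... and surjectively
    (∀ f : E → E, IsCrossedHom A f →
      ∃ φ : MulAut E, InducesIdOn A φ ∧ ∀ u : E, φ u * u⁻¹ = f u) :=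
  ⟨InducesIdOn.one,
   fun _ _ => InducesIdOn.mul,
   fun _ => InducesIdOn.inv,
   IsCrossedHom.one,
   fun _ _ => IsCrossedHom.mul hab,
   fun _ => IsCrossedHom.inv hab,
   fun _ _ hφ hφ' u => by
     rw [hφ.mul_apply_mul_inv hφ' u, hab _ (hφ'.2 u) _ (hφ.2 u)],
   fun _ => InducesIdOn.isCrossedHom,
   fun _ _ _ _ => MulAut.eq_of_mul_inv_eq,
   fun _ hf => ⟨hf.toMulAut, hf.inducesIdOn_toMulAut, hf.toMulAut_apply_mul_inv⟩⟩
end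

section
/- Let E be a group, A an abelian normal subgroup of E, and G = E/A. Assume that every crossed homomorphism ψ : G → A is principal (i.e. H¹(G, A) = 0 for the conjugation action of G on A). Then every automorphism φ of E inducing the identity on A and on G is conjugation by an element of A: there exists a ∈ A such that φ(u) = a u a⁻¹ for all u ∈ E. -/
/-- If every crossed homomorphism `G = E/A → A` is principal (`H¹(G,A) = 0`), then
every automorphism of `E` inducing the identity on the abelian normal subgroup `A`
and on `G` is conjugation by an element of `A`.  Crossed homomorphisms are encoded
as functions `f : E → E` whose values lie in `A`, which depend only on cosets
modulo `A`, and which satisfy the cocycle condition for the conjugation action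
`g • a = u a u⁻¹`. -/
theorem stmt_4 {E : Type*} [Group E] (A : Subgroup E) [A.Normal]
    (hab : ∀ a ∈ A, ∀ b ∈ A, a * b = b * a)
    (hH1 : ∀ f : E → E,
      (∀ u : E, f u ∈ A) →
      (∀ u v : E, u⁻¹ * v ∈ A → f u = f v) →
      (∀ u v : E, f (u * v) = f u * (u * f v * u⁻¹)) →
      ∃ a ∈ A, ∀ u : E, f u = a * (u * a * u⁻¹)⁻¹) :
    ∀ φ : E ≃* E, (∀ a ∈ A, φ a = a) → (∀ u : E, φ u * u⁻¹ ∈ A) →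
      ∃ a ∈ A, ∀ u : E, φ u = a * u * a⁻¹ := by
  intro φ hA hG
  obtain ⟨a, ha, hfa⟩ := hH1 (fun u => φ u * u⁻¹) (fun u => hG u)
    (by
      intro u v huv
      have hv : v = u * (u⁻¹ * v) := by group
      have h1 : φ v = φ u * (u⁻¹ * v) := by
        nth_rewrite 1 [hv]
        rw [map_mul, hA _ huv]
      show φ u * u⁻¹ = φ v * v⁻¹
      rw [h1]; group)
    (by
      intro u v
      simp only [map_mul]
      group)
  refine ⟨a, ha, fun u => ?_⟩
  have := hfa u
  have h2 : φ u = a * (u * a * u⁻¹)⁻¹ * u := by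
    rw [← this]; group
  rw [h2]; group
end

section
/- Let k be an algebraically closed field of characteristic p > 0, let A be a finite-dimensional associative unital k-algebra, and let L be a Lie subalgebra of A (for the commutator bracket ⁅x,y⁆ = x y − y x) which is closed under p-th powers, i.e. x ∈ L implies x^p ∈ L. If L is not abelian (there exist x, y ∈ L with x y ≠ y x), then there exists a nonzero element w ∈ L with w^p = 0. -/
/-!
Suppose `L` has no nonzero element with vanishing `p`-th power. Then every `x ∈ L` lies in the
span of `x ^ p, x ^ p ^ 2, …`: in the first relation `x ^ p ^ m ∈ span (x, …, x ^ p ^ (m - 1))`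
either `x` occurs, or the relation is the `p`-th power of a shorter one (`k` is perfect and
powers of `x` commute), which must then already vanish. As `ad (x ^ p ^ i) = (ad x) ^ p ^ i`,
this makes `ad x` a root of the separable polynomial `X - ∑ cᵢ X ^ p ^ (i + 1)`, so for a
non-central `a ∈ L` the operator `ad a` on `L` has an eigenvector `y` with eigenvalue `μ ≠ 0`.
But then `(ad y) ^ 2 a = 0`, so `a` commutes with `y ^ p` and its powers, hence with `y`,
contradicting `⁅a, y⁆ = μ • y ≠ 0`.
-/

attribute [local instance 100] LieRing.ofAssociativeRing

open Polynomial LieAlgebra Submodule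

theorem Finset.sum_pow_char_of_commute {ι R : Type*} [Semiring R] (p : ℕ) [Fact p.Prime]
    [CharP R p] (s : Finset ι) (f : ι → R) (hf : ∀ i j, Commute (f i) (f j)) :
    (∑ i ∈ s, f i) ^ p = ∑ i ∈ s, f i ^ p := by
  classical
  induction s using Finset.induction_on with
  | empty => simp [zero_pow (Fact.out : p.Prime).ne_zero]
  | insert a s ha ih =>
    rw [Finset.sum_insert ha, Finset.sum_insert ha,
      add_pow_char_of_commute _ (Commute.sum_right _ _ _ fun j _ => hf a j), ih]

instance Module.End.charP {K M : Type*} [Field K] [AddCommGroup M] [Module K M] [Nontrivial M]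
    (p : ℕ) [CharP K p] : CharP (Module.End K M) p :=
  charP_of_injective_algebraMap' K p

theorem LieAlgebra.ad_pow_char_pow {R A : Type*} [CommRing R] [Ring A] [Algebra R A] (p : ℕ)
    [Fact p.Prime] [CharP (Module.End R A) p] (a : A) (n : ℕ) :
    ad R A a ^ p ^ n = ad R A (a ^ p ^ n) := by
  simp only [ad_eq_lmul_left_sub_lmul_right, Pi.sub_apply]
  rw [sub_pow_char_pow_of_commute _ _ (LinearMap.commute_mulLeft_right a a),
    LinearMap.pow_mulLeft, LinearMap.pow_mulRight]

theorem exists_mem_span_image_range {R M : Type*} [Ring R] [AddCommGroup M] [Module R M]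
    [IsNoetherian R M] (v : ℕ → M) : ∃ m, v m ∈ span R (v '' Finset.range m) := by
  let W : ℕ →o Submodule R M :=
    ⟨fun m => span R (v '' Finset.range m), fun m n hmn => span_mono <| Set.image_mono <| by
      simpa using Finset.range_subset_range.2 hmn⟩
  obtain ⟨m, hm⟩ := monotone_stabilizes_iff_noetherian.mpr inferInstance W
  refine ⟨m, ?_⟩
  change v m ∈ W m
  rw [hm (m + 1) m.le_succ]
  exact subset_span ⟨m, by simp, rfl⟩

theorem derivative_eq_zero_of_mem_span_X_pow_prime_pow_succ {R : Type*} [CommRing R] {p : ℕ}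
    [CharP R p] {f : R[X]} (hf : f ∈ span R (Set.range fun i : ℕ => (X : R[X]) ^ p ^ (i + 1))) :
    derivative f = 0 := by
  refine (span_le (p := LinearMap.ker derivative)).2 ?_ hf
  rintro _ ⟨i, rfl⟩
  simp [derivative_X_pow]

theorem separable_X_sub_of_mem_span_X_pow_prime_pow_succ {R : Type*} [CommRing R] {p : ℕ}
    [CharP R p] {f : R[X]} (hf : f ∈ span R (Set.range fun i : ℕ => (X : R[X]) ^ p ^ (i + 1))) :
    (X - f).Separable := by
  rw [separable_def, derivative_sub, derivative_X,
    derivative_eq_zero_of_mem_span_X_pow_prime_pow_succ hf, sub_zero]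
  exact isCoprime_one_right

theorem Module.End.eq_zero_of_separable_minpoly_of_forall_hasEigenvalue_eq_zero {K V : Type*}
    [Field K] [IsAlgClosed K] [AddCommGroup V] [Module K V] [FiniteDimensional K V]
    {f : Module.End K V}
    (hsep : (minpoly K f).Separable) (h : ∀ μ, f.HasEigenvalue μ → μ = 0) : f = 0 := by
  have hroots : (minpoly K f).roots ≤ {0} :=
    (Multiset.le_iff_subset (nodup_roots hsep)).2 fun μ hμ => by
      simpa using h μ (hasEigenvalue_iff_isRoot.2 (isRoot_of_mem_roots hμ))
  have hdvd : minpoly K f ∣ X := by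
    rw [(IsAlgClosed.splits _).eq_prod_roots_of_monic
      (minpoly.monic (Algebra.IsIntegral.isIntegral f))]
    have := Multiset.prod_dvd_prod_of_le (Multiset.map_le_map (f := fun x => X - C x) hroots)
    rwa [Multiset.map_singleton, Multiset.prod_singleton, map_zero, sub_zero] at this
  obtain ⟨g, hg⟩ := hdvd
  simpa using congrArg (aeval f) hg

section Jacobson

variable {k A : Type*} [Field k] [Ring A] [Algebra k A] {p : ℕ}

theorem pow_pow_mem (L : LieSubalgebra k A) (hpow : ∀ x ∈ L, x ^ p ∈ L) {x : A}
    (hx : x ∈ L) (n : ℕ) : x ^ p ^ n ∈ L := by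
  induction n with
  | zero => simpa using hx
  | succ n ih => simpa [pow_succ, pow_mul] using hpow _ ih

variable [Fact p.Prime] [CharP k p] [Nontrivial A]

theorem mem_span_pow_prime_pow_succ_of_pow_eq_sum [PerfectRing k p] (L : LieSubalgebra k A)
    (hpow : ∀ x ∈ L, x ^ p ∈ L) (hred : ∀ w ∈ L, w ^ p = 0 → w = 0) {x : A} (hx : x ∈ L)
    {m : ℕ} {a : ℕ → k} (h : x ^ p ^ m = ∑ i ∈ Finset.range m, a i • x ^ p ^ i) :
    x ∈ span k (Set.range fun i => x ^ p ^ (i + 1)) := by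
  have : CharP A p := charP_of_injective_algebraMap' k p
  induction m generalizing a with
  | zero =>
    obtain rfl : x = 0 := by simpa using h
    exact zero_mem _
  | succ m ih =>
    rw [Finset.sum_range_succ', pow_zero, pow_one] at h
    by_cases h0 : a 0 = 0
    · -- the `p`-th power of `x ^ p ^ m - ∑ bᵢ • x ^ p ^ i`, with `bᵢ ^ p = aᵢ₊₁`, vanishes by `h`
      apply ih (a := fun i => (frobeniusEquiv k p).symm (a (i + 1)))
      rw [← sub_eq_zero]
      refine hred _ (sub_mem (pow_pow_mem L hpow hx m) (sum_mem fun i _ =>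
        SMulMemClass.smul_mem _ (pow_pow_mem L hpow hx i))) ?_
      rw [sub_pow_char_of_commute p (Commute.sum_right _ _ _ fun i _ =>
          ((Commute.refl x).pow_pow _ _).smul_right _),
        Finset.sum_pow_char_of_commute _ _ _ fun i j =>
          (((Commute.refl x).pow_pow _ _).smul_left _).smul_right _]
      simp_rw [_root_.smul_pow, frobeniusEquiv_symm_pow_p, ← pow_mul, ← pow_succ]
      rw [h, h0, zero_smul, add_zero, sub_self]
    · have hx' : x = (a 0)⁻¹ • (x ^ p ^ (m + 1) -
          ∑ i ∈ Finset.range m, a (i + 1) • x ^ p ^ (i + 1)) := by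
        rw [h, add_sub_cancel_left, smul_smul, inv_mul_cancel₀ h0, one_smul]
      have hmem : ∀ i, x ^ p ^ (i + 1) ∈ span k (Set.range fun i => x ^ p ^ (i + 1)) :=
        fun i => subset_span (Set.mem_range_self i)
      have := Submodule.smul_mem _ (a 0)⁻¹ (sub_mem (hmem m)
        (sum_mem (t := Finset.range m) fun i _ => Submodule.smul_mem _ (a (i + 1)) (hmem i)))
      rwa [← hx'] at this

theorem mem_span_pow_prime_pow_succ [FiniteDimensional k A] [PerfectRing k p]
    (L : LieSubalgebra k A) (hpow : ∀ x ∈ L, x ^ p ∈ L) (hred : ∀ w ∈ L, w ^ p = 0 → w = 0)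
    {x : A} (hx : x ∈ L) : x ∈ span k (Set.range fun i => x ^ p ^ (i + 1)) := by
  obtain ⟨m, hm⟩ := exists_mem_span_image_range (R := k) fun i => x ^ p ^ i
  obtain ⟨a, ha⟩ := (mem_span_image_finset_iff_exists_fun' k).1 hm
  exact mem_span_pow_prime_pow_succ_of_pow_eq_sum L hpow hred hx ha.symm

theorem lie_pow_char_eq_zero_of_lie_eq_smul {a y : A} {μ : k} (h : ⁅a, y⁆ = μ • y) :
    ⁅a, y ^ p⁆ = 0 := by
  have hy2 : (ad k A y ^ 2) a = 0 := by
    rw [sq, Module.End.mul_apply, ad_apply, ad_apply, ← lie_skew y a, h]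
    simp
  have hyp : ad k A (y ^ p) = ad k A y ^ (p - 2) * ad k A y ^ 2 := by
    simpa [← pow_add, Nat.sub_add_cancel (Fact.out : p.Prime).two_le] using
      (ad_pow_char_pow (R := k) p y 1).symm
  rw [← lie_skew, neg_eq_zero, ← ad_apply (R := k), hyp, Module.End.mul_apply, hy2, map_zero]

theorem lie_eq_zero_of_lie_eq_smul [FiniteDimensional k A] [PerfectRing k p]
    (L : LieSubalgebra k A) (hpow : ∀ x ∈ L, x ^ p ∈ L) (hred : ∀ w ∈ L, w ^ p = 0 → w = 0)
    {a y : A} {μ : k} (hy : y ∈ L) (h : ⁅a, y⁆ = μ • y) : ⁅a, y⁆ = 0 := by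
  have hyp : Commute a (y ^ p) := commute_iff_lie_eq.2 (lie_pow_char_eq_zero_of_lie_eq_smul h)
  refine LinearMap.mem_ker.1 ((span_le (p := LinearMap.ker (ad k A a))).2 ?_
    (mem_span_pow_prime_pow_succ L hpow hred hy))
  rintro _ ⟨i, rfl⟩
  rw [SetLike.mem_coe, LinearMap.mem_ker, ad_apply, ← commute_iff_lie_eq]
  simpa only [pow_succ', pow_mul] using hyp.pow_right (p ^ i)

theorem LieSubalgebra.coe_aeval_ad_apply (L : LieSubalgebra k A) {f : k[X]}
    (hf : f ∈ span k (Set.range fun i : ℕ => (X : k[X]) ^ p ^ (i + 1))) (a y : L) :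
    ((aeval (ad k L a) f) y : A) = ⁅aeval (a : A) f, (y : A)⁆ := by
  induction hf using Submodule.span_induction with
  | mem g hg =>
    obtain ⟨i, rfl⟩ := hg
    simp [LieSubalgebra.coe_ad_pow, ad_pow_char_pow]
  | zero => simp
  | add f g _ _ hf hg => simp [hf, hg]
  | smul c f _ hf => simp [hf]

theorem separable_minpoly_ad [FiniteDimensional k A] [PerfectRing k p]
    (L : LieSubalgebra k A) (hpow : ∀ x ∈ L, x ^ p ∈ L) (hred : ∀ w ∈ L, w ^ p = 0 → w = 0)
    (a : L) : (minpoly k (ad k L a)).Separable := by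
  obtain ⟨f, hf, hfa⟩ : ∃ f ∈ span k (Set.range fun i : ℕ => (X : k[X]) ^ p ^ (i + 1)),
      aeval (a : A) f = a := by
    have := mem_span_pow_prime_pow_succ L hpow hred a.2
    rwa [show (Set.range fun i => (a : A) ^ p ^ (i + 1)) =
        (aeval (a : A)).toLinearMap '' Set.range fun i : ℕ => (X : k[X]) ^ p ^ (i + 1) by
      simp [← Set.range_comp, Function.comp_def], ← map_span, mem_map] at this
  refine (separable_X_sub_of_mem_span_X_pow_prime_pow_succ hf).of_dvd (minpoly.dvd k _ ?_)
  rw [map_sub, aeval_X, sub_eq_zero]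
  ext y
  rw [LieSubalgebra.coe_aeval_ad_apply L hf, hfa]
  rfl

end Jacobson

/-- Jacobson's lemma: over an algebraically closed field `k` of characteristic
`p > 0`, a Lie subalgebra `L` of a finite-dimensional associative unital
`k`-algebra `A` (with the commutator bracket) which is closed under `p`-th powers
and is not abelian contains a nonzero element `w` with `w ^ p = 0`. -/
theorem stmt_6 {k : Type*} [Field k] [IsAlgClosed k] (p : ℕ) [Fact p.Prime]
    [CharP k p] {A : Type*} [Ring A] [Algebra k A] [FiniteDimensional k A]
    (L : LieSubalgebra k A)
    (hpow : ∀ x ∈ L, x ^ p ∈ L)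
    (hnab : ∃ x ∈ L, ∃ y ∈ L, x * y ≠ y * x) :
    ∃ w ∈ L, w ≠ 0 ∧ w ^ p = 0 := by
  by_contra! hcon
  have hred : ∀ w ∈ L, w ^ p = 0 → w = 0 := fun w hw => not_imp_not.1 (hcon w hw)
  obtain ⟨a, ha, b, hb, hab⟩ := hnab
  have : Nontrivial A := ⟨_, _, hab⟩
  have hT : ad k L ⟨a, ha⟩ ≠ 0 := fun h => hab <| by
    simpa [Ring.lie_def, sub_eq_zero] using congrArg (fun T => (T ⟨b, hb⟩ : A)) h
  obtain ⟨μ, hμ, y, hy⟩ : ∃ μ ≠ 0, ∃ y, (ad k L ⟨a, ha⟩).HasEigenvector μ y := by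
    by_contra! h
    refine hT <| Module.End.eq_zero_of_separable_minpoly_of_forall_hasEigenvalue_eq_zero
      (separable_minpoly_ad L hpow hred _) fun μ hμ => ?_
    obtain ⟨y, hy⟩ := hμ.exists_hasEigenvector
    by_contra hμ0
    exact h μ hμ0 y hy
  have hlie : ⁅a, (y : A)⁆ = μ • (y : A) := congrArg Subtype.val hy.apply_eq_smul
  have hy0 : μ • (y : A) = 0 := hlie ▸ lie_eq_zero_of_lie_eq_smul L hpow hred y.2 hlie
  exact hy.2 (Subtype.ext ((smul_eq_zero.1 hy0).resolve_left hμ))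
end

section
/- Let k be an algebraically closed field and L a finite-dimensional Lie algebra over k. If for every v ∈ L the adjoint endomorphism ad(v) : L → L, x ↦ ⁅v, x⁆, is a semisimple linear endomorphism, then L is abelian, i.e. ⁅x, y⁆ = 0 for all x, y ∈ L. -/
open Module End LieAlgebra

lemma Module.End.IsSemisimple.apply_eq_zero_of_apply_apply_eq_zero {R M : Type*} [CommRing R]
    [AddCommGroup M] [Module R M] {f : End R M} (hf : f.IsSemisimple) {x : M}
    (hx : f (f x) = 0) : f x = 0 := by
  have hx2 : x ∈ f.genEigenspace 0 (2 : ℕ) := by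
    rw [mem_genEigenspace_nat]
    simpa [pow_two] using hx
  rwa [hf.isFinitelySemisimple.genEigenspace_eq_eigenspace 0 (by norm_num), eigenspace_zero] at hx2

lemma LieAlgebra.smul_eq_zero_of_lie_eq_smul_of_isSemisimple_ad {R L : Type*} [CommRing R]
    [LieRing L] [LieAlgebra R L] {x w : L} {μ : R} (hw : (ad R L w).IsSemisimple)
    (hxw : ⁅x, w⁆ = μ • w) : μ • w = 0 := by
  have hwx : ad R L w x = -(μ • w) := by
    rw [ad_apply, ← lie_skew, hxw]
  have hww : ad R L w (ad R L w x) = 0 := by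
    rw [hwx, map_neg, map_smul, ad_apply, lie_self, smul_zero, neg_zero]
  simpa [hwx] using hw.apply_eq_zero_of_apply_apply_eq_zero hww

/-- A finite-dimensional Lie algebra over an algebraically closed field in which
every adjoint endomorphism `ad v` is semisimple is abelian. -/
theorem stmt_8 {k : Type*} [Field k] [IsAlgClosed k] {L : Type*} [LieRing L]
    [LieAlgebra k L] [FiniteDimensional k L]
    (h : ∀ v : L, (LieAlgebra.ad k L v).IsSemisimple) :
    ∀ x y : L, ⁅x, y⁆ = 0 := by
  intro x y
  suffices ad k L x = 0 by simpa using LinearMap.congr_fun this y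
  refine (h x).eq_zero_iff_forall_eigenvalue.mpr fun μ hμ ↦ ?_
  obtain ⟨w, hw⟩ := hμ.exists_hasEigenvector
  have hμw : μ • w = 0 := smul_eq_zero_of_lie_eq_smul_of_isSemisimple_ad (h w) hw.apply_eq_smul
  exact (smul_eq_zero.mp hμw).resolve_right hw.right
end

section
/- Let k be a field, A an associative unital k-algebra, and v ∈ A. Suppose there exists a separable polynomial f ∈ k[X] with f(v) = 0. Then the adjoint endomorphism ad(v) : A → A, x ↦ v·x − x·v, is a semisimple k-linear endomorphism of A. -/
open Polynomial
open scoped TensorProduct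

section Aux

variable {k A : Type*} [Field k] [Ring A] [Algebra k A]

lemma aeval_mulLeft (v : A) (p : k[X]) :
    Polynomial.aeval (LinearMap.mulLeft k v) p = LinearMap.mulLeft k (Polynomial.aeval v p) := by
  induction p using Polynomial.induction_on' with
  | add p q hp hq => ext x; simp [hp, hq, add_mul]
  | monomial n c =>
      simp only [aeval_monomial, ← smul_eq_mul, algebraMap_smul]
      rw [LinearMap.pow_mulLeft]
      ext x
      simp [Algebra.smul_def, mul_assoc]

lemma aeval_mulRight (v : A) (p : k[X]) :
    Polynomial.aeval (LinearMap.mulRight k v) p = LinearMap.mulRight k (Polynomial.aeval v p) := by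
  induction p using Polynomial.induction_on' with
  | add p q hp hq => ext x; simp [hp, hq, mul_add]
  | monomial n c =>
      simp only [aeval_monomial, ← smul_eq_mul, algebraMap_smul]
      rw [LinearMap.pow_mulRight]
      ext x
      simp [Algebra.smul_def, Algebra.commutes, mul_assoc]

variable (h : k[X]) (hsep : h.Separable)

include hsep in
lemma unram : Algebra.FormallyUnramified k (AdjoinRoot h) := by
  constructor
  have key : (KaehlerDifferential.D k (AdjoinRoot h)) (AdjoinRoot.root h) = 0 := by
    obtain ⟨a, b, hab⟩ := hsep
    set D := KaehlerDifferential.D k (AdjoinRoot h)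
    have h1 : D (Polynomial.aeval (AdjoinRoot.root h) h) = 0 := by
      rw [AdjoinRoot.aeval_eq, AdjoinRoot.mk_self, map_zero]
    rw [Derivation.map_aeval, AdjoinRoot.aeval_eq] at h1
    calc D (AdjoinRoot.root h)
        = (Polynomial.aeval (AdjoinRoot.root h) (a * h + b * derivative h)) • D (AdjoinRoot.root h) := by
          rw [hab]; simp
      _ = 0 := by
          simp only [map_add, map_mul, add_smul, mul_smul]
          simp [AdjoinRoot.aeval_eq, AdjoinRoot.mk_self, h1]
  have : ∀ x : Ω[(AdjoinRoot h)⁄k], x = 0 := by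
    intro x
    have hx : x ∈ (⊤ : Submodule (AdjoinRoot h) (Ω[(AdjoinRoot h)⁄k])) := trivial
    rw [← KaehlerDifferential.span_range_derivation] at hx
    refine Submodule.span_induction ?_ rfl (fun a b _ _ ha hb => by rw [ha, hb, add_zero])
      (fun r a _ ha => by rw [ha, smul_zero]) hx
    rintro _ ⟨b, rfl⟩
    obtain ⟨p, rfl⟩ := AdjoinRoot.mk_surjective b
    rw [← AdjoinRoot.aeval_eq, Derivation.map_aeval, key, smul_zero]
  exact subsingleton_of_forall_eq 0 fun x => this x

end Aux

set_option maxHeartbeats 1000000 in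
/-- If `v` is an element of an associative unital `k`-algebra `A` annihilated by
some separable polynomial over `k`, then `ad(v) = (x ↦ v·x − x·v)` is a semisimple
`k`-linear endomorphism of `A`. -/
theorem stmt_9 {k A : Type*} [Field k] [Ring A] [Algebra k A] (v : A)
    (h : ∃ f : Polynomial k, f.Separable ∧ Polynomial.aeval v f = 0) :
    Module.End.IsSemisimple
      ((LinearMap.mulLeft k v - LinearMap.mulRight k v : Module.End k A)) := by
  obtain ⟨f, hsep, hf⟩ := h
  cases subsingleton_or_nontrivial A with
  | inl hsub =>
      rw [Module.End.isSemisimple_iff]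
      intro p _
      refine ⟨⊥, ?_, disjoint_bot_right, ?_⟩
      · intro x hx; simp_all
      · rw [codisjoint_iff, Subsingleton.elim (p ⊔ ⊥) ⊤]
  | inr hnt =>
  have hv : IsIntegral k v := IsAlgebraic.isIntegral ⟨f, hsep.ne_zero, hf⟩
  set m : k[X] := minpoly k v with hm
  have hmsep : m.Separable := hsep.of_dvd (minpoly.dvd k v hf)
  have hmmonic : m.Monic := minpoly.monic hv
  -- the algebra B
  set B := AdjoinRoot m
  have : Algebra.FormallyUnramified k B := unram m hmsep
  have hBfin : Module.Finite k B := (AdjoinRoot.powerBasis' hmmonic).finite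
  have : Module.Finite k (B ⊗[k] B) := Module.Finite.tensorProduct k B B
  have : Algebra.FormallyUnramified B (B ⊗[k] B) := inferInstance
  have : Algebra.FormallyUnramified k (B ⊗[k] B) := Algebra.FormallyUnramified.comp k B (B ⊗[k] B)
  have hred : IsReduced (B ⊗[k] B) := Algebra.FormallyUnramified.isReduced_of_field k (B ⊗[k] B)
  -- the algebra map
  have hL : Polynomial.aeval (LinearMap.mulLeft k v) m = 0 := by
    rw [aeval_mulLeft, minpoly.aeval]
    ext x; simp
  have hR : Polynomial.aeval (LinearMap.mulRight k v) m = 0 := by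
    rw [aeval_mulRight, minpoly.aeval]
    ext x; simp
  have hcond : ∀ a ∈ Ideal.span {m}, Polynomial.aeval (LinearMap.mulLeft k v) a = 0 := by
    intro a ha
    obtain ⟨c, rfl⟩ := Ideal.mem_span_singleton.mp ha
    rw [map_mul, hL, zero_mul]
  have hcond' : ∀ a ∈ Ideal.span {m}, Polynomial.aeval (LinearMap.mulRight k v) a = 0 := by
    intro a ha
    obtain ⟨c, rfl⟩ := Ideal.mem_span_singleton.mp ha
    rw [map_mul, hR, zero_mul]
  set L : B →ₐ[k] Module.End k A :=
    Ideal.Quotient.liftₐ (Ideal.span {m}) (Polynomial.aeval (LinearMap.mulLeft k v)) hcond with hLdef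
  set R : B →ₐ[k] Module.End k A :=
    Ideal.Quotient.liftₐ (Ideal.span {m}) (Polynomial.aeval (LinearMap.mulRight k v)) hcond' with hRdef
  have hLmk : ∀ p : k[X], L (AdjoinRoot.mk m p) = Polynomial.aeval (LinearMap.mulLeft k v) p :=
    fun p => rfl
  have hRmk : ∀ p : k[X], R (AdjoinRoot.mk m p) = Polynomial.aeval (LinearMap.mulRight k v) p :=
    fun p => rfl
  have hcomm : ∀ x y, Commute (L x) (R y) := by
    intro x y
    obtain ⟨p, rfl⟩ := AdjoinRoot.mk_surjective x
    obtain ⟨q, rfl⟩ := AdjoinRoot.mk_surjective y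
    rw [hLmk, hRmk, aeval_mulLeft, aeval_mulRight]
    ext z
    simp [mul_assoc]
  set φ : (B ⊗[k] B) →ₐ[k] Module.End k A := Algebra.TensorProduct.lift L R hcomm with hphi
  set t : B ⊗[k] B := (AdjoinRoot.root m) ⊗ₜ[k] 1 - 1 ⊗ₜ[k] (AdjoinRoot.root m) with ht
  have hφt : φ t = LinearMap.mulLeft k v - LinearMap.mulRight k v := by
    rw [ht, map_sub, Algebra.TensorProduct.lift_tmul, Algebra.TensorProduct.lift_tmul,
      map_one, map_one, mul_one, one_mul]
    show L (AdjoinRoot.mk m X) - R (AdjoinRoot.mk m X) = _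
    rw [hLmk, hRmk, Polynomial.aeval_X, Polynomial.aeval_X]
  have hint : IsIntegral k t := IsIntegral.of_finite k t
  have hsq : Squarefree (minpoly k t) :=
    (minpoly.isRadical k t).squarefree (minpoly.ne_zero hint)
  refine Module.End.isSemisimple_of_squarefree_aeval_eq_zero hsq ?_
  rw [← hφt, Polynomial.aeval_algHom_apply, minpoly.aeval, map_zero]
end

section
/- Let k be a perfect field of characteristic p > 0, A a finite-dimensional associative unital k-algebra, and v ∈ A a nonzero element. Then at least one of the following holds: (a) there exists a nonzero element w in the k-subalgebra generated by v with w^p = 0; or (b) there exist n ≥ 1 and a₀, a₁, …, a_{n−1} ∈ k with a₀ ≠ 0 such that v^{p^n} + a_{n−1} v^{p^{n−1}} + ⋯ + a₁ v^p + a₀ v = 0 (a monic p-polynomial relation with nonzero linear coefficient, which is in particular a separable polynomial relation). -/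
/-!
Finite dimensionality yields a monic relation `v ^ p ^ n + ∑ i < n, a i • v ^ p ^ i = 0`; take
`n` minimal. If `a 0 = 0`, every coefficient has a `p`-th root in the perfect field `k`, and since
`x ↦ x ^ p` is additive on the commutative algebra generated by `v`, the relation is the `p`-th
power of a monic relation of degree `n - 1`. By minimality of `n` that element is nonzero.
-/
open Finset Polynomial

theorem exists_add_sum_smul_eq_zero {K M : Type*} [DivisionRing K] [AddCommGroup M] [Module K M]
    [Module.Finite K M] (f : ℕ → M) : ∃ n, ∃ a : ℕ → K, f n + ∑ i ∈ range n, a i • f i = 0 := by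
  obtain ⟨l, hl, hl0⟩ : ∃ l : ℕ →₀ K, Finsupp.linearCombination K f l = 0 ∧ l ≠ 0 := by
    simpa [linearIndependent_iff] using Module.Finite.not_linearIndependent_of_infinite (R := K) f
  set n := l.support.max' (Finsupp.support_nonempty_iff.mpr hl0)
  have hn : l n ≠ 0 := Finsupp.mem_support_iff.mp (max'_mem _ _)
  have hrel : ∑ i ∈ range n, l i • f i + l n • f n = 0 := by
    rw [← sum_range_succ, ← hl, Finsupp.linearCombination_apply, Finsupp.sum_of_support_subset]
    · exact fun i hi => mem_range_succ_iff.mpr (le_max' _ i hi)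
    · simp
  refine ⟨n, fun i => (l n)⁻¹ * l i, ?_⟩
  calc f n + ∑ i ∈ range n, ((l n)⁻¹ * l i) • f i
      = (l n)⁻¹ • (∑ i ∈ range n, l i • f i + l n • f n) := by
        simp only [smul_add, smul_sum, smul_smul, inv_mul_cancel₀ hn, one_smul, add_comm]
    _ = 0 := by rw [hrel, smul_zero]

section Frobenius

variable {k A : Type*} [CommRing k] [Ring A] [Algebra k A] (p : ℕ) [Fact p.Prime] [CharP k p]

theorem add_sum_smul_pow_pow_pow_char (v : A) (n : ℕ) (b : ℕ → k) :
    (v ^ p ^ n + ∑ i ∈ range n, b i • v ^ p ^ i) ^ p =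
      v ^ p ^ (n + 1) + ∑ i ∈ range n, b i ^ p • v ^ p ^ (i + 1) := by
  have aeval_eq (e : ℕ) (c : ℕ → k) (d : ℕ → ℕ) :
      aeval v (X ^ e + ∑ i ∈ range n, C (c i) * X ^ d i) = v ^ e + ∑ i ∈ range n, c i • v ^ d i := by
    simp [Algebra.smul_def]
  rw [← aeval_eq, ← map_pow, add_pow_char, sum_pow_char, ← aeval_eq]
  simp only [mul_pow, ← C_pow, ← pow_mul, ← pow_succ]

theorem exists_add_sum_smul_pow_char_eq_zero [PerfectRing k p] {v : A} {n : ℕ} {a : ℕ → k}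
    (ha : a 0 = 0) (hrel : v ^ p ^ (n + 1) + ∑ i ∈ range (n + 1), a i • v ^ p ^ i = 0) :
    ∃ b : ℕ → k, (v ^ p ^ n + ∑ i ∈ range n, b i • v ^ p ^ i) ^ p = 0 :=
  ⟨fun i => (frobeniusEquiv k p).symm (a (i + 1)), by
    simpa [add_sum_smul_pow_pow_pow_char, sum_range_succ', ha] using hrel⟩

end Frobenius

/-- Dichotomy from the proof of Jacobson's lemma: over a perfect field `k` of
characteristic `p > 0`, a nonzero element `v` of a finite-dimensional associative
unital `k`-algebra either generates a subalgebra containing a nonzero `w` with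
`w ^ p = 0`, or satisfies a monic `p`-polynomial relation with nonzero linear
coefficient (hence a separable polynomial relation). -/
theorem stmt_10 {k : Type*} [Field k] (p : ℕ) [Fact p.Prime] [CharP k p]
    [PerfectField k] {A : Type*} [Ring A] [Algebra k A] [FiniteDimensional k A]
    (v : A) (hv : v ≠ 0) :
    (∃ w ∈ Algebra.adjoin k {v}, w ≠ 0 ∧ w ^ p = 0) ∨
    (∃ n : ℕ, 1 ≤ n ∧ ∃ a : ℕ → k, a 0 ≠ 0 ∧
      v ^ p ^ n + ∑ i ∈ Finset.range n, a i • v ^ p ^ i = 0) := by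
  classical
  have hex : ∃ n, ∃ a : ℕ → k, v ^ p ^ n + ∑ i ∈ range n, a i • v ^ p ^ i = 0 :=
    exists_add_sum_smul_eq_zero fun i => v ^ p ^ i
  obtain ⟨a, ha⟩ := Nat.find_spec hex
  rcases hN : Nat.find hex with _ | n
  · exact absurd (by simpa [hN] using ha) hv
  rw [hN] at ha
  by_cases ha0 : a 0 = 0
  · obtain ⟨b, hb⟩ := exists_add_sum_smul_pow_char_eq_zero p ha0 ha
    have hmem : v ^ p ^ n + ∑ i ∈ range n, b i • v ^ p ^ i ∈ Algebra.adjoin k {v} :=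
      have hvmem := Algebra.self_mem_adjoin_singleton k v
      add_mem (pow_mem hvmem _) (sum_mem fun i _ => Subalgebra.smul_mem _ (pow_mem hvmem _) _)
    exact .inl ⟨_, hmem, fun h0 => Nat.find_min hex (hN ▸ n.lt_succ_self) ⟨b, h0⟩, hb⟩
  · exact .inr ⟨n + 1, n.succ_pos, a, ha0, ha⟩
end

section
/- Let R be a commutative ring and G a finite group whose order is invertible in R, acting on a commutative R-algebra B by R-algebra automorphisms; let A = B^G be the subalgebra of G-invariant elements. Then for every R-module N, the natural R-linear homomorphism N ⊗_R A → (N ⊗_R B)^G (induced by the inclusion A ⊆ B, where G acts on N ⊗_R B through its action on B) is an isomorphism. -/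
open scoped TensorProduct

/-- The subalgebra of `G`-invariant elements of an `R`-algebra `B` on which a
group `G` acts by `R`-algebra automorphisms. -/
def fixedSubalgebra (G R B : Type*) [Monoid G] [CommSemiring R] [Semiring B]
    [Algebra R B] [MulSemiringAction G B] [SMulCommClass G R B] :
    Subalgebra R B where
  carrier := MulAction.fixedPoints G B
  mul_mem' := fun {x y} hx hy g => by
    rw [smul_mul', hx g, hy g]
  add_mem' := fun {x y} hx hy g => by
    rw [smul_add, hx g, hy g]
  algebraMap_mem' := fun r g => smul_algebraMap g r


/-!
The Reynolds operator `e = |G|⁻¹ • ∑ g` projects `B` onto `A = B^G`. Tensoring with `N` keeps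
`N ⊗ A → N ⊗ B` split injective (with retraction `id ⊗ e`), and `id ⊗ e` is the Reynolds
operator of `N ⊗ B`, so its image, which is the image of `N ⊗ A`, is `(N ⊗ B)^G`.
-/

namespace LinearMap.IsProj

variable {R M N : Type*} [CommSemiring R] [AddCommMonoid M] [Module R M]
  [AddCommMonoid N] [Module R N] {m : Submodule R M} {f : M →ₗ[R] M}

theorem lTensor (h : IsProj m f) : IsProj (range (m.subtype.lTensor N)) (f.lTensor N) where
  map_mem x := by
    rw [← h.subtype_comp_codRestrict, lTensor_comp, comp_apply]
    exact mem_range_self _ _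
  map_id x := by
    rintro ⟨y, rfl⟩
    have hfm : f ∘ₗ m.subtype = m.subtype := LinearMap.ext fun v => h.map_id v v.2
    rw [← comp_apply, ← lTensor_comp, hfm]

theorem lTensor_subtype_injective (h : IsProj m f) :
    Function.Injective (m.subtype.lTensor N) := by
  have hretr : h.codRestrict ∘ₗ m.subtype = LinearMap.id :=
    LinearMap.ext h.codRestrict_apply_cod
  refine Function.HasLeftInverse.injective ⟨h.codRestrict.lTensor N, fun x => ?_⟩
  rw [← comp_apply, ← lTensor_comp, hretr, lTensor_id, id_apply]

end LinearMap.IsProj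

namespace Representation

variable {k G V : Type*} [CommRing k] [Group G] [AddCommGroup V] [Module k V]
  (ρ : Representation k G V) (N : Type*) [AddCommGroup N] [Module k N]

theorem tprod_trivial_apply (g : G) : tprod (trivial k G N) ρ g = (ρ g).lTensor N :=
  rfl

variable [Fintype G] [Invertible (Fintype.card G : k)]

theorem lTensor_averageMap :
    ρ.averageMap.lTensor N = (tprod (trivial k G N) ρ).averageMap := by
  simp only [averageMap, GroupAlgebra.average, map_smul, map_sum, asAlgebraHom_of,
    tprod_trivial_apply]
  rw [LinearMap.lTensor_smul]
  exact congrArg _ (map_sum (LinearMap.lTensorHom N) _ _)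

theorem range_lTensor_invariants_subtype :
    LinearMap.range (ρ.invariants.subtype.lTensor N) = (tprod (trivial k G N) ρ).invariants := by
  refine le_antisymm ?_ fun x hx => ?_
  · rintro _ ⟨y, rfl⟩ g
    have hfix : ρ g ∘ₗ ρ.invariants.subtype = ρ.invariants.subtype :=
      LinearMap.ext fun v => v.2 g
    rw [tprod_trivial_apply, ← LinearMap.comp_apply, ← LinearMap.lTensor_comp, hfix]
  · rw [← averageMap_id _ x hx, ← lTensor_averageMap]
    exact ρ.isProj_averageMap.lTensor.map_mem x

end Representation

/-- Let `G` be a finite group whose order is invertible in the commutative ring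
`R`, acting on a commutative `R`-algebra `B` by `R`-algebra automorphisms, and let
`A = B^G`.  Then for every `R`-module `N`, the natural map
`N ⊗[R] A → (N ⊗[R] B)^G` is an isomorphism: the map `N ⊗[R] A → N ⊗[R] B`
induced by the inclusion `A ⊆ B` is injective, with image exactly the
`G`-invariants of `N ⊗[R] B` (where `G` acts through `B`). -/
theorem stmt_13 {R : Type*} [CommRing R] (G : Type*) [Group G] [Finite G]
    (hord : IsUnit (Nat.card G : R))
    (B : Type*) [CommRing B] [Algebra R B] [MulSemiringAction G B]
    [SMulCommClass G R B]
    (N : Type*) [AddCommGroup N] [Module R N] :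
    Function.Injective
      (LinearMap.lTensor N (fixedSubalgebra G R B).val.toLinearMap) ∧
    Set.range
      (LinearMap.lTensor N (fixedSubalgebra G R B).val.toLinearMap) =
      {x : N ⊗[R] B | ∀ g : G,
        LinearMap.lTensor N (DistribMulAction.toLinearMap R B g) x = x} := by
  have : Fintype G := Fintype.ofFinite G
  have : Invertible (Fintype.card G : R) := (Nat.card_eq_fintype_card (α := G) ▸ hord).invertible
  let ρ := Representation.ofDistribMulAction R G B
  -- `fixedSubalgebra G R B` and `ρ.invariants` have the same carrier, so the maps agree definitionally.
  exact ⟨ρ.isProj_averageMap.lTensor_subtype_injective,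
    congrArg SetLike.coe (ρ.range_lTensor_invariants_subtype N)⟩
end

section
/- Let R be a commutative ring and G a finite group whose order is invertible in R, acting on a commutative R-algebra B by R-algebra automorphisms; let A = B^G be the subalgebra of G-invariant elements. If B is flat as an R-module, then A is flat as an R-module. -/
theorem Module.Flat.of_isProj {R M : Type*} [CommSemiring R] [AddCommMonoid M] [Module R M]
    [Module.Flat R M] {p : Submodule R M} {f : M →ₗ[R] M} (hf : LinearMap.IsProj p f) :
    Module.Flat R p :=
  .of_retract p.subtype hf.codRestrict (by ext; simp)

theorem Representation.flat_invariants {k G V : Type*} [CommRing k] [Group G] [Fintype G]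
    [Invertible (Fintype.card G : k)] [AddCommGroup V] [Module k V] [Module.Flat k V]
    (ρ : Representation k G V) : Module.Flat k ρ.invariants :=
  .of_isProj ρ.isProj_averageMap

/-- Let `G` be a finite group whose order is invertible in the commutative ring
`R`, acting on a commutative `R`-algebra `B` by `R`-algebra automorphisms, and let
`A = B^G` be the invariant subalgebra.  If `B` is flat as an `R`-module, then `A`
is flat as an `R`-module. -/
theorem stmt_15 {R : Type*} [CommRing R] (G : Type*) [Group G] [Finite G]
    (hord : IsUnit (Nat.card G : R))
    (B : Type*) [CommRing B] [Algebra R B] [MulSemiringAction G B]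
    [SMulCommClass G R B]
    (hflat : Module.Flat R B) :
    Module.Flat R (fixedSubalgebra G R B) := by
  have := Fintype.ofFinite G
  have : Invertible (Fintype.card G : R) := (Nat.card_eq_fintype_card (α := G) ▸ hord).invertible
  -- `fixedSubalgebra G R B` is, by definition, the submodule of invariants of this representation.
  exact (Representation.ofDistribMulAction R G B).flat_invariants
end
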